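/- For every non-negative integer m, σ_m^{(3)} = (−1)^m (3^{m+4} − 2^{m+7} + 2(m+4)(m+6) + 7)/256. -/
import Mathlib


/-- The rational numbers `σ_m^{(k)}`: `σ_m^{(1)} = (-1)^m/4` and, for `k ≥ 2`,
`σ_m^{(k)} = Σ_{i=0}^m Σ_{j=0}^i Σ_{n=1}^{k-1} (-k)^{m-i} σ_j^{(n)} σ_{i-j}^{(k-n)}`.
`sigmaC k m` is `σ_m^{(k)}` (junk value `0` for `k = 0`). -/
noncomputable def sigmaC : ℕ → ℕ → ℚ := fun k =>
  Nat.strongRecOn k (fun k ih =>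
    if k = 0 then fun _ => 0
    else if k = 1 then fun m => (-1 : ℚ) ^ m / 4
    else fun m =>
      let s : ℕ → ℕ → ℚ := fun n j => if h : n < k then ih n h j else 0
      ∑ i ∈ Finset.range (m + 1), ∑ j ∈ Finset.range (i + 1),
        ∑ n ∈ Finset.Icc 1 (k - 1), (-(k : ℚ)) ^ (m - i) * s n j * s (k - n) (i - j))

lemma sigmaC_eq (k : ℕ) : sigmaC k =
    if k = 0 then fun _ => 0
    else if k = 1 then fun m => (-1 : ℚ) ^ m / 4
    else fun m =>
      ∑ i ∈ Finset.range (m + 1), ∑ j ∈ Finset.range (i + 1),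
        ∑ n ∈ Finset.Icc 1 (k - 1), (-(k : ℚ)) ^ (m - i) *
          (if _ : n < k then sigmaC n j else 0) *
          (if _ : k - n < k then sigmaC (k - n) (i - j) else 0) := by
  rw [sigmaC, Nat.strongRecOn]
  rw [WellFounded.fix_eq]
  rfl

lemma sigmaC_one (m : ℕ) : sigmaC 1 m = (-1 : ℚ) ^ m / 4 := by
  rw [sigmaC_eq]; norm_num

lemma sum_shift (a : ℕ → ℚ) (r : ℚ) (m : ℕ) :
    (∑ i ∈ Finset.range (m + 2), r ^ (m + 1 - i) * a i)
      = r * (∑ i ∈ Finset.range (m + 1), r ^ (m - i) * a i) + a (m + 1) := by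
  rw [Finset.sum_range_succ, Nat.sub_self, pow_zero, one_mul, Finset.mul_sum]
  congr 1
  refine Finset.sum_congr rfl fun i hi => ?_
  rw [Finset.mem_range] at hi
  rw [← mul_assoc, ← pow_succ']
  congr 2
  omega

lemma sigmaC_two_sum (m : ℕ) : sigmaC 2 m =
    ∑ i ∈ Finset.range (m + 1), (-2 : ℚ) ^ (m - i) * (((i : ℚ) + 1) * (-1) ^ i / 16) := by
  rw [sigmaC_eq]
  norm_num [Finset.Icc_self]
  refine Finset.sum_congr rfl fun i _ => ?_
  have hterm : ∀ j ∈ Finset.range (i + 1),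
      (-2 : ℚ) ^ (m - i) * sigmaC 1 j * sigmaC 1 (i - j)
        = (-2 : ℚ) ^ (m - i) * ((-1 : ℚ) ^ i / 16) := by
    intro j hj
    rw [Finset.mem_range] at hj
    obtain ⟨d, rfl⟩ : ∃ d, i = j + d := ⟨i - j, by omega⟩
    rw [sigmaC_one, sigmaC_one, Nat.add_sub_cancel_left]
    rw [show (-1 : ℚ) ^ (j + d) = (-1) ^ j * (-1) ^ d from pow_add _ _ _]
    ring
  rw [Finset.sum_congr rfl hterm, Finset.sum_const, Finset.card_range]
  ring

lemma sigmaC_two (m : ℕ) :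
    sigmaC 2 m = (-1 : ℚ) ^ m * ((2 : ℚ) ^ (m + 2) - (m : ℚ) - 3) / 16 := by
  induction m with
  | zero => rw [sigmaC_two_sum]; norm_num
  | succ m ih =>
    rw [sigmaC_two_sum, sum_shift, ← sigmaC_two_sum, ih]
    push_cast
    ring

lemma pow_two_sum (i : ℕ) :
    ∑ j ∈ Finset.range (i + 1), (2 : ℚ) ^ (j + 2) = 2 ^ (i + 3) - 4 := by
  induction i with
  | zero => norm_num
  | succ i ih => rw [Finset.sum_range_succ, ih]; ring

lemma a3_eq (i : ℕ) :
    (∑ j ∈ Finset.range (i + 1),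
        (sigmaC 1 j * sigmaC 2 (i - j) + sigmaC 2 j * sigmaC 1 (i - j)))
      = (-1 : ℚ) ^ i * ((2 : ℚ) ^ (i + 4) - 8 - ((i : ℚ) + 1) * ((i : ℚ) + 6)) / 64 := by
  have step : ∀ j ∈ Finset.range (i + 1),
      sigmaC 1 j * sigmaC 2 (i - j) + sigmaC 2 j * sigmaC 1 (i - j)
        = ((-1 : ℚ) ^ i / 64) * (2 : ℚ) ^ (i - j + 2) + ((-1 : ℚ) ^ i / 64) * (2 : ℚ) ^ (j + 2)
          + (-1 : ℚ) ^ i * (-(i : ℚ) - 6) / 64 := by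
    intro j hj
    rw [Finset.mem_range] at hj
    obtain ⟨d, rfl⟩ : ∃ d, i = j + d := ⟨i - j, by omega⟩
    rw [sigmaC_one, sigmaC_one, sigmaC_two, sigmaC_two, Nat.add_sub_cancel_left]
    rw [show (-1 : ℚ) ^ (j + d) = (-1) ^ j * (-1) ^ d from pow_add _ _ _]
    push_cast
    ring
  rw [Finset.sum_congr rfl step]
  have h1 : ∑ j ∈ Finset.range (i + 1), (2 : ℚ) ^ (i - j + 2)
      = ∑ j ∈ Finset.range (i + 1), (2 : ℚ) ^ (j + 2) := by
    have := Finset.sum_range_reflect (fun j => (2 : ℚ) ^ (j + 2)) (i + 1)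
    simpa using this
  rw [Finset.sum_add_distrib, Finset.sum_add_distrib, ← Finset.mul_sum, ← Finset.mul_sum,
    h1, pow_two_sum, Finset.sum_const, Finset.card_range, nsmul_eq_mul]
  push_cast
  ring

lemma sigmaC_three_sum (m : ℕ) : sigmaC 3 m =
    ∑ i ∈ Finset.range (m + 1), (-3 : ℚ) ^ (m - i) *
      ((-1 : ℚ) ^ i * ((2 : ℚ) ^ (i + 4) - 8 - ((i : ℚ) + 1) * ((i : ℚ) + 6)) / 64) := by
  rw [sigmaC_eq]
  norm_num [show Finset.Icc 1 2 = {1, 2} from rfl]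
  refine Finset.sum_congr rfl fun i _ => ?_
  rw [← a3_eq, Finset.mul_sum]
  refine Finset.sum_congr rfl fun j _ => ?_
  ring

/-- `σ_m^{(3)} = (-1)^m (3^{m+4} - 2^{m+7} + 2(m+4)(m+6) + 7)/256`. -/
theorem sigmaC_three (m : ℕ) :
    sigmaC 3 m =
      (-1 : ℚ) ^ m * (3 ^ (m + 4) - 2 ^ (m + 7) + 2 * ((m : ℚ) + 4) * ((m : ℚ) + 6) + 7) / 256 := by
  induction m with
  | zero => rw [sigmaC_three_sum]; norm_num
  | succ m ih =>
    rw [sigmaC_three_sum, sum_shift, ← sigmaC_three_sum, ih]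
    push_cast
    ring
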